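/- The solution of the ODE p'(t) = −κ p(t) + γ e^{−γ(t−t₀)}(1 − p(t)) with p(t₀) = 0 satisfies 0 ≤ p(t) ≤ 1 for all t ≥ t₀ (the expected photon number in the cavity driven by a single photon is a probability). -/

import Mathlib

/-!
Both bounds come from the same comparison principle for `f' = -a f + b` with `b ≥ 0`: multiplying
by the integrating factor `exp A`, `A' = a`, gives `(f exp A)' = b exp A ≥ 0`, so `f exp A` is
nondecreasing and `f` keeps the sign of `f t₀ ≥ 0`. For `f = p` take `a = κ + γ e^{-γ(t-t₀)}` and
`b = γ e^{-γ(t-t₀)}`; for `f = 1 - p` take `a = γ e^{-γ(t-t₀)}` and `b = κ p`, which is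
nonnegative by the first bound.
-/

open Real Set

theorem nonneg_of_hasDerivAt_eq_neg_mul_add {f a b A : ℝ → ℝ} {t₀ : ℝ}
    (hA : ∀ t, t₀ ≤ t → HasDerivAt A (a t) t)
    (hf : ∀ t, t₀ ≤ t → HasDerivAt f (-a t * f t + b t) t)
    (hb : ∀ t, t₀ ≤ t → 0 ≤ b t) (hf₀ : 0 ≤ f t₀) {t : ℝ} (ht : t₀ ≤ t) : 0 ≤ f t := by
  have hderiv : ∀ s, t₀ ≤ s →
      HasDerivAt (fun s => f s * exp (A s)) (b s * exp (A s)) s := fun s hs =>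
    ((hf s hs).mul (hA s hs).exp).congr_deriv (by ring)
  have hmono : MonotoneOn (fun s => f s * exp (A s)) (Ici t₀) := by
    refine monotoneOn_of_hasDerivWithinAt_nonneg (f' := fun s => b s * exp (A s))
      (convex_Ici t₀) (fun s hs => (hderiv s hs).continuousAt.continuousWithinAt) ?_ ?_
    · rw [interior_Ici]
      exact fun s hs => (hderiv s (le_of_lt hs)).hasDerivWithinAt
    · rw [interior_Ici]
      exact fun s hs => mul_nonneg (hb s (le_of_lt hs)) (exp_pos _).le
  have hle : f t₀ * exp (A t₀) ≤ f t * exp (A t) := hmono self_mem_Ici ht ht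
  exact nonneg_of_mul_nonneg_left (mul_nonneg hf₀ (exp_pos _).le |>.trans hle) (exp_pos _)

theorem hasDerivAt_exp_neg_mul_sub (γ t₀ t : ℝ) :
    HasDerivAt (fun t => exp (-γ * (t - t₀))) (-γ * exp (-γ * (t - t₀))) t := by
  convert (((hasDerivAt_id' t).sub_const t₀).const_mul (-γ)).exp using 1
  ring

theorem excitation_probability_bounds (κ γ t₀ : ℝ) (hκ : 0 < κ) (hγ : 0 < γ)
    (p : ℝ → ℝ)
    (hp : ∀ t, t₀ ≤ t →
      HasDerivAt p (-κ * p t + γ * Real.exp (-γ * (t - t₀)) * (1 - p t)) t)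
    (hp0 : p t₀ = 0) :
    ∀ t, t₀ ≤ t → 0 ≤ p t ∧ p t ≤ 1 := by
  have hE := hasDerivAt_exp_neg_mul_sub γ t₀
  have hp_nonneg : ∀ t, t₀ ≤ t → 0 ≤ p t := fun t ht =>
    nonneg_of_hasDerivAt_eq_neg_mul_add (a := fun s => κ + γ * exp (-γ * (s - t₀)))
      (b := fun s => γ * exp (-γ * (s - t₀)))
      (A := fun s => κ * s - exp (-γ * (s - t₀)))
      (fun s _ => (((hasDerivAt_id s).const_mul κ).sub (hE s)).congr_deriv (by simp))
      (fun s hs => (hp s hs).congr_deriv (by ring)) (fun s _ => by positivity) hp0.ge ht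
  intro t ht
  have h_one_sub_nonneg : 0 ≤ 1 - p t :=
    nonneg_of_hasDerivAt_eq_neg_mul_add (f := fun s => 1 - p s)
      (a := fun s => γ * exp (-γ * (s - t₀))) (b := fun s => κ * p s)
      (A := fun s => -exp (-γ * (s - t₀)))
      (fun s _ => (hE s).neg.congr_deriv (by ring))
      (fun s hs => ((hp s hs).const_sub 1).congr_deriv (by ring))
      (fun s hs => mul_nonneg hκ.le (hp_nonneg s hs)) (by simp [hp0]) ht
  exact ⟨hp_nonneg t ht, by linarith⟩
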